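/- Form the pattern graph whose vertices are the distinct access patterns p_1, …, p_m of the workload Q and whose edge {p_i, p_j} has weight w_ij = n_i · z_ij · (‖p_i‖ − z_ij) + n_j · z_ij · (‖p_j‖ − z_ij). For every partition of {p_1, …, p_m} into n nonempty groups, inducing a partition of Q into Q_1, …, Q_n that keeps all queries of a pattern together, one has Σ_{k=1}^{n} \overline{IPA}(Q_k) = W − Cut, where W = Σ_{1 ≤ i < j ≤ m} w_ij is the total edge weight and Cut is the total weight of edges whose two endpoint patterns lie in different groups. Consequently a partition minimizes Σ_k \overline{IPA}(Q_k) if and only if it maximizes Cut. -/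

import Mathlib

open Finset

/-- The upper bound `\overline{IPA}(Q')`.  With `p_1, …, p_m` the distinct access
patterns of `Q'`, `n_i` their multiplicities, `z_ij = |p_i ∩ p_j|` and
`‖p_i‖ = |p_i|`, it is `Σ_{i < j} (n_i·z_ij·(‖p_i‖ − z_ij) + n_j·z_ij·(‖p_j‖ − z_ij))`,
written equivalently as a sum over ordered pairs of distinct patterns. -/
def IPAbar {α : Type*} [DecidableEq α] (Q : Multiset (Finset α)) : ℕ :=
  ∑ x ∈ Q.toFinset.offDiag,
    Q.count x.1 * (x.1 ∩ x.2).card * (x.1.card - (x.1 ∩ x.2).card)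

/-- `G` is a partition of the set of distinct access patterns of `Q` into `n`
pairwise disjoint nonempty groups. -/
def IsPatternPartition {α : Type*} [DecidableEq α] (Q : Multiset (Finset α))
    {n : ℕ} (G : Fin n → Finset (Finset α)) : Prop :=
  (∀ k, (G k).Nonempty) ∧ (∀ k l, k ≠ l → Disjoint (G k) (G l)) ∧
    Finset.univ.biUnion G = Q.toFinset

/-- The cut value of a partition `G` of the pattern graph of `Q`: the total
weight of edges `{p_i, p_j}` (of weight
`n_i·z_ij·(‖p_i‖ − z_ij) + n_j·z_ij·(‖p_j‖ − z_ij)`, written as a sum over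
ordered pairs of distinct patterns) whose endpoint patterns lie in different
groups. -/
def patternCut {α : Type*} [DecidableEq α] (Q : Multiset (Finset α))
    {n : ℕ} (G : Fin n → Finset (Finset α)) : ℕ :=
  ∑ x ∈ Q.toFinset.offDiag.filter (fun x => ∀ k, ¬ (x.1 ∈ G k ∧ x.2 ∈ G k)),
    Q.count x.1 * (x.1 ∩ x.2).card * (x.1.card - (x.1 ∩ x.2).card)

/-! A pair of patterns lying in a common group `G k` contributes the same weight to
`IPAbar (Q_k)` as to `IPAbar Q`, because a pattern of `G k` has the same multiplicity in
`Q_k` as in `Q`; and since the groups are disjoint, every pair lies in at most one group.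
So the pairs of `Q` split into those counted in exactly one `IPAbar (Q_k)` and those in the
cut, giving `Σ_k IPAbar (Q_k) + Cut = IPAbar Q` with `IPAbar Q` independent of the
partition. -/

namespace Finset

variable {ι β M : Type*}

lemma offDiag_filter [DecidableEq β] (s : Finset β) (p : β → Prop) [DecidablePred p] :
    (s.filter p).offDiag = s.offDiag.filter (fun x => p x.1 ∧ p x.2) := by
  ext ⟨a, b⟩
  simp only [mem_offDiag, mem_filter]
  tauto

lemma sum_sum_filter_eq_sum_filter_exists [Fintype ι] [AddCommMonoid M] (s : Finset β)
    (P : ι → β → Prop) [∀ i, DecidablePred (P i)] [DecidablePred fun x => ∃ i, P i x]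
    (hP : Pairwise fun i j => ∀ x, P i x → ¬ P j x) (f : β → M) :
    ∑ i, ∑ x ∈ s with P i x, f x = ∑ x ∈ s with ∃ i, P i x, f x := by
  classical
  rw [← sum_biUnion]
  · congr 1
    ext x
    simp
  · intro i _ j _ hij
    exact disjoint_filter.2 fun x _ => hP hij x

end Finset

section PatternGraph

variable {α : Type*} [DecidableEq α] (Q : Multiset (Finset α))

/-- The share `n_p·z_pq·(‖p‖ − z_pq)` of `p` in the weight of the edge `{p, q}`. -/
def patternWeight (p q : Finset α) : ℕ :=
  Q.count p * (p ∩ q).card * (p.card - (p ∩ q).card)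

lemma IPAbar_filter (p : Finset α → Prop) [DecidablePred p] :
    IPAbar (Q.filter p) =
      ∑ x ∈ Q.toFinset.offDiag with p x.1 ∧ p x.2, patternWeight Q x.1 x.2 := by
  rw [IPAbar, Multiset.toFinset_filter, Finset.offDiag_filter]
  refine Finset.sum_congr rfl fun x hx => ?_
  rw [patternWeight, Multiset.count_filter_of_pos (Finset.mem_filter.1 hx).2.1]

lemma sum_IPAbar_filter_add_patternCut {n : ℕ} (G : Fin n → Finset (Finset α))
    (hG : ∀ k l, k ≠ l → Disjoint (G k) (G l)) :
    ∑ k, IPAbar (Q.filter (· ∈ G k)) + patternCut Q G = IPAbar Q := by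
  simp_rw [IPAbar_filter]
  rw [Finset.sum_sum_filter_eq_sum_filter_exists]
  · simp_rw [patternCut, ← not_exists]
    exact Finset.sum_filter_add_sum_filter_not _ _ _
  · intro k l hkl x hk hl
    exact Finset.disjoint_left.1 (hG k l hkl) hk.1 hl.1

end PatternGraph

/-- For every partition of the distinct access patterns of `Q` into `n`
nonempty groups, inducing the partition of `Q` into the sub-workloads
`Q_k = {q ∈ Q : pattern of q lies in group k}`, one has
`Σ_k \overline{IPA}(Q_k) = W − Cut`, where `W = \overline{IPA}(Q)` is the total
edge weight of the pattern graph and `Cut` is the weight of edges crossing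
between different groups.  Consequently a partition minimizes
`Σ_k \overline{IPA}(Q_k)` if and only if it maximizes `Cut`. -/
theorem sum_IPAbar_eq_total_sub_cut {α : Type*} [DecidableEq α]
    (Q : Multiset (Finset α)) (n : ℕ) (G : Fin n → Finset (Finset α))
    (hG : IsPatternPartition Q G) :
    (∑ k : Fin n, IPAbar (Q.filter (· ∈ G k)) = IPAbar Q - patternCut Q G)
      ∧ ((∀ G' : Fin n → Finset (Finset α), IsPatternPartition Q G' →
            ∑ k : Fin n, IPAbar (Q.filter (· ∈ G k))
              ≤ ∑ k : Fin n, IPAbar (Q.filter (· ∈ G' k)))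
          ↔ (∀ G' : Fin n → Finset (Finset α), IsPatternPartition Q G' →
            patternCut Q G' ≤ patternCut Q G)) := by
  have key := sum_IPAbar_filter_add_patternCut Q G hG.2.1
  refine ⟨by omega, forall_congr' fun G' => imp_congr_right fun hG' => ?_⟩
  have key' := sum_IPAbar_filter_add_patternCut Q G' hG'.2.1
  omega
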